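/- Let n ≥ 2 and s ≥ 2, and let G(J(P_n)) = {u_1,…,u_r}. Let U = u_1^{a_1}⋯u_r^{a_r} be an s-fold product in F(J(P_n)^s). If U is not a minimal generator of J(P_n)^s, then there exist indices p and q with a_p > 0 and a_q > 0 such that u_p u_q ∉ G(J(P_n)^2). -/

import Mathlib

open MvPolynomial

noncomputable section

/-- The cover ideal of the path graph `P_n` on vertices `x_1, …, x_n`:
the intersection of the ideals `(x_i, x_{i+1})` over the edges of the path. -/
def pathCoverIdeal (k : Type*) [Field k] (n : ℕ) : Ideal (MvPolynomial ℕ k) :=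
  ⨅ i ∈ Finset.Icc 1 (n - 1), Ideal.span {(X i : MvPolynomial ℕ k), X (i + 1)}

/-- A monomial with coefficient `1`. -/
def IsMonomial {k : Type*} [Field k] (m : MvPolynomial ℕ k) : Prop :=
  ∃ a : ℕ →₀ ℕ, m = monomial a 1

/-- The minimal monomial generating set `G(I)` of a monomial ideal `I`:
monomials of `I` that are not strictly divisible by another monomial of `I`. -/
def minGens {k : Type*} [Field k] (I : Ideal (MvPolynomial ℕ k)) :
    Set (MvPolynomial ℕ k) :=
  {m | IsMonomial m ∧ m ∈ I ∧ ∀ m', IsMonomial m' → m' ∈ I → m' ∣ m → m' = m}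

/-- The rooted list `R(P_n)` of the path `P_n`. -/
def rootedList (k : Type*) [Field k] : ℕ → List (MvPolynomial ℕ k)
  | 0 => [1]
  | 1 => [1]
  | 2 => [X 1, X 2]
  | 3 => [X 2, X 1 * X 3]
  | (n + 4) =>
      ((rootedList k (n + 2)).map fun u => X (n + 3) * u) ++
      ((rootedList k (n + 1)).map fun u => X (n + 4) * X (n + 2) * u)

/-- `F(I^s)`: the set of `s`-fold products of minimal generators of `I`. -/
def sFold {k : Type*} [Field k] (I : Ideal (MvPolynomial ℕ k)) (s : ℕ) :
    Set (MvPolynomial ℕ k) :=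
  {m | ∃ L : List (MvPolynomial ℕ k), L.length = s ∧ (∀ u ∈ L, u ∈ minGens I) ∧ m = L.prod}

/-- `a >_lex b`: the first entry where `a` and `b` differ is bigger in `a`. -/
def lexGt (a b : ℕ → ℕ) : Prop :=
  ∃ t, (∀ j, j < t → a j = b j) ∧ b t < a t

/-- `a` is an exponent-vector expression of `M` as an `s`-fold product of the terms of
the list `L`. -/
def IsExprOn {k : Type*} [Field k] (L : List (MvPolynomial ℕ k)) (s : ℕ) (a : ℕ → ℕ)
    (M : MvPolynomial ℕ k) : Prop :=
  (∀ i, L.length ≤ i → a i = 0) ∧ (∑ i ∈ Finset.range L.length, a i) = s ∧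
    M = ∏ i ∈ Finset.range L.length, (L.getD i 1) ^ (a i)

/-- `a` is the (lexicographically) maximal expression of `M` as an `s`-fold product of
the terms of the list `L`. -/
def IsMaxExpr {k : Type*} [Field k] (L : List (MvPolynomial ℕ k)) (s : ℕ) (a : ℕ → ℕ)
    (M : MvPolynomial ℕ k) : Prop :=
  IsExprOn L s a M ∧ ∀ b, IsExprOn L s b M → b ≠ a → lexGt a b

/-- The rooted order `M >_R N` on `s`-fold products, relative to the list `L` of
minimal generators: maximal expressions are compared lexicographically. -/
def rootedGt {k : Type*} [Field k] (L : List (MvPolynomial ℕ k)) (s : ℕ)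
    (M N : MvPolynomial ℕ k) : Prop :=
  ∃ a b, IsMaxExpr L s a M ∧ IsMaxExpr L s b N ∧ lexGt a b

/-- An ideal is generated by a subset of the variables. -/
def genByVars {k : Type*} [Field k] (I : Ideal (MvPolynomial ℕ k)) : Prop :=
  ∃ T : Set ℕ, I = Ideal.span ((fun i => (X i : MvPolynomial ℕ k)) '' T)

end

/-!
Write `U = x^t` with `t = ∑ a_p e_p`, where `e_p` is the `0/1` exponent vector of the minimal
vertex cover `u_p`. Since `J(P_n) ⊆ (x_j, x_{j+1})`, every monomial `x^c` of `J(P_n)^s` has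
`c_j + c_{j+1} ≥ s` on every edge, while `t_1 + t_2 ≤ s` and `t_{n-1} + t_n ≤ s` because a minimal
cover contains only one end of an end edge. So a proper divisor `x^c ∈ J(P_n)^s` of `U` drops
an inner vertex `i`, and then `t_{i-1} + t_i > s` and `t_i + t_{i+1} > s`: some `u_p` contains
`x_{i-1} x_i` and some `u_q` contains `x_i x_{i+1}`. Exchanging the parts of `u_p` and `u_q` beyond
`i` yields two covers whose product properly divides `u_p u_q`.
-/

open Finset

def IsPathCover (n : ℕ) (e : ℕ →₀ ℕ) : Prop :=
  ∀ j ∈ Icc 1 (n - 1), e j ≠ 0 ∨ e (j + 1) ≠ 0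

/-- A `0/1` exponent vector is a minimal vertex cover of `P_n` exactly when it is a cover and
each of its vertices covers some edge on its own. -/
structure IsMinimalPathCover (n : ℕ) (e : ℕ →₀ ℕ) : Prop where
  le_one : ∀ j, e j ≤ 1
  isPathCover : IsPathCover n e
  exists_private_edge : ∀ j, e j ≠ 0 →
    (2 ≤ j ∧ j ≤ n ∧ e (j - 1) = 0) ∨ (1 ≤ j ∧ j + 1 ≤ n ∧ e (j + 1) = 0)

namespace IsMinimalPathCover

variable {n : ℕ} {e : ℕ →₀ ℕ}

lemma zero (hn : n ≤ 1) : IsMinimalPathCover n 0 :=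
  ⟨fun _ => zero_le_one, fun j hj => by simp at hj; omega, fun _ h => absurd rfl h⟩

lemma mem_Icc_of_ne_zero (h : IsMinimalPathCover n e) {j : ℕ} (hj : e j ≠ 0) : j ∈ Icc 1 n := by
  have := h.exists_private_edge j hj
  simp only [mem_Icc]
  omega

lemma apply_eq_zero_of_lt (h : IsMinimalPathCover n e) {j : ℕ} (hj : n < j) : e j = 0 := by
  by_contra hne
  have := mem_Icc.1 (h.mem_Icc_of_ne_zero hne)
  omega

lemma apply_one_add_apply_two_le (h : IsMinimalPathCover n e) : e 1 + e 2 ≤ 1 := by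
  have := h.le_one 1
  have := h.le_one 2
  by_contra!
  have := h.exists_private_edge 1 (by omega)
  simp only [Nat.reduceAdd] at this
  omega

lemma apply_pred_add_apply_le (h : IsMinimalPathCover n e) : e (n - 1) + e n ≤ 1 := by
  have := h.le_one (n - 1)
  have := h.le_one n
  by_contra!
  have := h.exists_private_edge n (by omega)
  omega

lemma single_add (h : IsMinimalPathCover (n + 2) e) :
    IsMinimalPathCover (n + 4) (Finsupp.single (n + 3) 1 + e) := by
  have hz (i : ℕ) (hi : n + 2 < i) : e i = 0 := h.apply_eq_zero_of_lt hi
  refine ⟨fun j => ?_, fun j hj => ?_, fun j hj => ?_⟩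
  · have := h.le_one j
    simp only [Finsupp.add_apply, Finsupp.single_apply] at *
    grind (splits := 16)
  · have := h.isPathCover j
    simp only [Finsupp.add_apply, Finsupp.single_apply] at *
    grind (splits := 16)
  · have := h.exists_private_edge j
    have := hz j
    simp only [Finsupp.add_apply, Finsupp.single_apply] at *
    grind (splits := 16)

lemma single_add_single_add (h : IsMinimalPathCover (n + 1) e) :
    IsMinimalPathCover (n + 4) (Finsupp.single (n + 4) 1 + Finsupp.single (n + 2) 1 + e) := by
  have hz (i : ℕ) (hi : n + 1 < i) : e i = 0 := h.apply_eq_zero_of_lt hi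
  refine ⟨fun j => ?_, fun j hj => ?_, fun j hj => ?_⟩
  · have := h.le_one j
    simp only [Finsupp.add_apply, Finsupp.single_apply] at *
    grind (splits := 16)
  · have := h.isPathCover j
    simp only [Finsupp.add_apply, Finsupp.single_apply] at *
    grind (splits := 16)
  · have := h.exists_private_edge j
    have := hz j
    simp only [Finsupp.add_apply, Finsupp.single_apply] at *
    grind (splits := 16)

end IsMinimalPathCover

lemma exists_isMinimalPathCover_of_mem_rootedList (k : Type*) [Field k] :
    ∀ n, ∀ u ∈ rootedList k n, ∃ e, IsMinimalPathCover n e ∧ u = monomial e 1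
  | 0 | 1 => by
      simp only [rootedList, List.mem_singleton, forall_eq]
      exact ⟨0, .zero (by omega), by simp⟩
  | 2 => by
      simp only [rootedList, List.mem_cons, List.not_mem_nil, or_false, forall_eq_or_imp, forall_eq]
      refine ⟨⟨Finsupp.single 1 1, ?_, rfl⟩, ⟨Finsupp.single 2 1, ?_, rfl⟩⟩ <;>
        refine ⟨fun j => ?_, fun j hj => ?_, fun j hj => ?_⟩ <;>
        simp only [Finsupp.single_apply, mem_Icc] at * <;> grind
  | 3 => by
      simp only [rootedList, List.mem_cons, List.not_mem_nil, or_false, forall_eq_or_imp, forall_eq]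
      refine ⟨⟨Finsupp.single 2 1, ?_, rfl⟩,
        ⟨Finsupp.single 1 1 + Finsupp.single 3 1, ?_, by rw [monomial_single_add, pow_one]; rfl⟩⟩ <;>
        refine ⟨fun j => ?_, fun j hj => ?_, fun j hj => ?_⟩ <;>
        simp only [Finsupp.add_apply, Finsupp.single_apply, mem_Icc] at * <;> grind
  | n + 4 => by
      simp only [rootedList, List.mem_append, List.mem_map]
      rintro u (⟨v, hv, rfl⟩ | ⟨v, hv, rfl⟩)
      · obtain ⟨e, he, rfl⟩ := exists_isMinimalPathCover_of_mem_rootedList k (n + 2) v hv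
        exact ⟨_, he.single_add, by rw [monomial_single_add, pow_one]⟩
      · obtain ⟨e, he, rfl⟩ := exists_isMinimalPathCover_of_mem_rootedList k (n + 1) v hv
        exact ⟨_, he.single_add_single_add, by
          rw [add_assoc, monomial_single_add, monomial_single_add, pow_one, pow_one, mul_assoc]⟩

lemma monomial_mem_pathCoverIdeal {k : Type*} [Field k] {n : ℕ} {e : ℕ →₀ ℕ}
    (he : IsPathCover n e) : monomial e (1 : k) ∈ pathCoverIdeal k n := by
  simp only [pathCoverIdeal, Submodule.mem_iInf]
  intro j hj
  rcases he j hj with h | h <;>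
    exact Ideal.mem_of_dvd _ (X_dvd_monomial.2 (Or.inr h)) (Ideal.subset_span (by simp))

section Weight

variable {σ R : Type*} [CommSemiring R] (φ : (σ →₀ ℕ) →+ ℕ) {S : Set (σ →₀ ℕ)}

lemma span_monomial_image_pow_le (hS : ∀ c ∈ S, 1 ≤ φ c) (s : ℕ) :
    Ideal.span ((fun c => monomial c (1 : R)) '' S) ^ s ≤
      Ideal.span ((fun c => monomial c (1 : R)) '' {c | s ≤ φ c}) := by
  induction s with
  | zero =>
    rw [pow_zero, Ideal.one_eq_top, top_le_iff, Ideal.eq_top_iff_one]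
    exact Ideal.subset_span ⟨0, by simp, by simp⟩
  | succ s ih =>
    calc _ ≤ _ * _ := pow_succ (Ideal.span ((fun c => monomial c (1 : R)) '' S)) s ▸
            Ideal.mul_mono_left ih
      _ = _ := Ideal.span_mul_span' _ _
      _ ≤ _ := by
        refine Ideal.span_mono ?_
        rintro _ ⟨_, ⟨c, hc, rfl⟩, _, ⟨d, hd, rfl⟩, rfl⟩
        refine ⟨c + d, ?_, by simp [monomial_mul]⟩
        have := hS d hd
        simp only [Set.mem_ofPred_eq, map_add] at hc ⊢
        omega

lemma le_of_monomial_mem_span_monomial_image_pow [Nontrivial R] (hS : ∀ c ∈ S, 1 ≤ φ c)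
    {s : ℕ} {c : σ →₀ ℕ} (h : monomial c (1 : R) ∈ Ideal.span ((fun c => monomial c 1) '' S) ^ s) :
    s ≤ φ c := by
  obtain ⟨d, hd, hdc⟩ := mem_ideal_span_monomial_image.1 (span_monomial_image_pow_le φ hS s h) c
    (by classical simp)
  obtain ⟨c', rfl⟩ := exists_add_of_le hdc
  exact hd.trans (by simp)

end Weight

lemma le_apply_add_apply_of_monomial_mem_pathCoverIdeal_pow {k : Type*} [Field k] {n s j : ℕ}
    (hj : j ∈ Icc 1 (n - 1)) {c : ℕ →₀ ℕ} (h : monomial c (1 : k) ∈ pathCoverIdeal k n ^ s) :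
    s ≤ c j + c (j + 1) := by
  have hJ : pathCoverIdeal k n ≤ Ideal.span ((fun c => monomial c (1 : k)) ''
      {Finsupp.single j 1, Finsupp.single (j + 1) 1}) := by
    rw [Set.image_pair]
    exact iInf₂_le j hj
  refine le_of_monomial_mem_span_monomial_image_pow
    (Finsupp.applyAddHom j + Finsupp.applyAddHom (j + 1)) ?_ (Ideal.pow_right_mono hJ s h)
  simp

lemma monomial_mem_minGens_iff {k : Type*} [Field k] {I : Ideal (MvPolynomial ℕ k)}
    {t : ℕ →₀ ℕ} : monomial t (1 : k) ∈ minGens I ↔ monomial t 1 ∈ I ∧ ∀ c < t, monomial c 1 ∉ I := by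
  simp only [minGens, IsMonomial, Set.mem_ofPred_eq, lt_iff_le_and_ne]
  refine ⟨fun ⟨_, hI, hmin⟩ => ⟨hI, fun c ⟨hct, hne⟩ hc => hne ?_⟩,
    fun ⟨hI, hmin⟩ => ⟨⟨t, rfl⟩, hI, ?_⟩⟩
  · exact monomial_left_injective one_ne_zero (hmin _ ⟨c, rfl⟩ hc (by simpa using hct))
  · rintro _ ⟨c, rfl⟩ hc hct
    by_contra hne
    exact hmin c ⟨by simpa using hct, fun h => hne (h ▸ rfl)⟩ hc

lemma IsPathCover.exists_add_add_single_eq {n : ℕ} {e f : ℕ →₀ ℕ} (he : IsPathCover n e)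
    (hf : IsPathCover n f) {i : ℕ} (hei : e (i - 1) ≠ 0) (hfi : f i ≠ 0) (hfi' : f (i + 1) ≠ 0) :
    ∃ A B, IsPathCover n A ∧ IsPathCover n B ∧ A + B + Finsupp.single i (e i) = e + f := by
  refine ⟨e.filter (· < i) + f.filter (i < ·), f.filter (· ≤ i) + e.filter (i < ·),
    fun j hj => ?_, fun j hj => ?_, ?_⟩
  · have := he j hj
    have := hf j hj
    simp only [Finsupp.add_apply, Finsupp.filter_apply] at *
    grind
  · have := he j hj
    have := hf j hj
    simp only [Finsupp.add_apply, Finsupp.filter_apply] at *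
    grind
  · ext j
    simp only [Finsupp.add_apply, Finsupp.filter_apply, Finsupp.single_apply]
    grind

section WeightedSum

variable {ι : Type*} {S : Finset ι} {a : ι → ℕ} {E : ι → ℕ →₀ ℕ} {j j' : ℕ}

lemma sum_smul_apply_add_apply_le (h : ∀ p ∈ S, 0 < a p → E p j + E p j' ≤ 1) :
    (∑ p ∈ S, a p • E p) j + (∑ p ∈ S, a p • E p) j' ≤ ∑ p ∈ S, a p := by
  simp only [Finsupp.finsetSum_apply, Finsupp.smul_apply, smul_eq_mul, ← sum_add_distrib,
    ← mul_add]
  refine sum_le_sum fun p hp => ?_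
  rcases (a p).eq_zero_or_pos with hap | hap
  · simp [hap]
  · exact (Nat.mul_le_mul_left _ (h p hp hap)).trans (mul_one _).le

lemma exists_apply_ne_zero_of_lt_sum_smul_apply_add_apply (hE : ∀ p ∈ S, ∀ i, E p i ≤ 1)
    (h : ∑ p ∈ S, a p < (∑ p ∈ S, a p • E p) j + (∑ p ∈ S, a p • E p) j') :
    ∃ p ∈ S, 0 < a p ∧ E p j ≠ 0 ∧ E p j' ≠ 0 := by
  by_contra! H
  refine h.not_ge (sum_smul_apply_add_apply_le fun p hp hap => ?_)
  have := hE p hp j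
  have := hE p hp j'
  have := H p hp hap
  omega

end WeightedSum

lemma IsMinimalPathCover.exists_lt_sum_smul_apply_add_apply {n : ℕ} (hn : 2 ≤ n) {ι : Type*}
    {S : Finset ι} {a : ι → ℕ} {E : ι → ℕ →₀ ℕ} (hE : ∀ p ∈ S, IsMinimalPathCover n (E p))
    {c : ℕ →₀ ℕ} (hc : c < ∑ p ∈ S, a p • E p)
    (hcov : ∀ j ∈ Icc 1 (n - 1), ∑ p ∈ S, a p ≤ c j + c (j + 1)) :
    ∃ i, ∑ p ∈ S, a p < (∑ p ∈ S, a p • E p) (i - 1) + (∑ p ∈ S, a p • E p) i ∧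
      ∑ p ∈ S, a p < (∑ p ∈ S, a p • E p) i + (∑ p ∈ S, a p • E p) (i + 1) := by
  obtain ⟨hct, i, hi⟩ := Finsupp.lt_def.1 hc
  have hle (j : ℕ) : c j ≤ (∑ p ∈ S, a p • E p) j := hct j
  obtain ⟨p, hp, hpi⟩ : ∃ p ∈ S, (a p • E p) i ≠ 0 :=
    exists_ne_zero_of_sum_ne_zero (by rw [← Finsupp.finsetSum_apply]; exact Nat.ne_zero_of_lt hi)
  have hi_mem := mem_Icc.1 ((hE p hp).mem_Icc_of_ne_zero (right_ne_zero_of_smul hpi))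
  have hi1 : i ≠ 1 := by
    rintro rfl
    have := sum_smul_apply_add_apply_le (a := a) fun p hp _ => (hE p hp).apply_one_add_apply_two_le
    have : ∑ p ∈ S, a p ≤ c 1 + c 2 := hcov 1 (by simp; omega)
    have := hle 2
    omega
  have hin : i ≠ n := by
    rintro rfl
    have := sum_smul_apply_add_apply_le (a := a) fun p hp _ => (hE p hp).apply_pred_add_apply_le
    have := hcov (i - 1) (by simp; omega)
    rw [Nat.sub_add_cancel (by omega)] at this
    have := hle (i - 1)
    omega
  have hl := hcov (i - 1) (by simp; omega)
  rw [Nat.sub_add_cancel (by omega)] at hl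
  have hr := hcov i (by simp; omega)
  have := hle (i - 1)
  have := hle (i + 1)
  exact ⟨i, by omega, by omega⟩

theorem nonminimal_sFold_contains_nonminimal_pair_general (k : Type*) [Field k]
    (n s : ℕ) (hn : 2 ≤ n)
    (a : ℕ → ℕ) (U : MvPolynomial ℕ k)
    (hU : IsExprOn (rootedList k n) s a U)
    (hnm : U ∉ minGens ((pathCoverIdeal k n) ^ s)) :
    ∃ p q, 0 < a p ∧ 0 < a q ∧
      (rootedList k n).getD p 1 * (rootedList k n).getD q 1 ∉
        minGens ((pathCoverIdeal k n) ^ 2) := by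
  obtain ⟨-, rfl, rfl⟩ := hU
  set L := rootedList k n
  choose! E hE hLE using fun p (hp : p ∈ range L.length) =>
    exists_isMinimalPathCover_of_mem_rootedList k n _
      (List.getD_eq_getElem _ _ (mem_range.1 hp) ▸ List.getElem_mem _)
  have hU : ∏ p ∈ range L.length, L.getD p 1 ^ a p =
      monomial (∑ p ∈ range L.length, a p • E p) 1 := by
    rw [monomial_sum_one]
    refine prod_congr rfl fun p hp => ?_
    rw [hLE p hp, monomial_pow, one_pow]
  have hUJ : monomial (∑ p ∈ range L.length, a p • E p) (1 : k) ∈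
      pathCoverIdeal k n ^ ∑ p ∈ range L.length, a p := by
    rw [← hU, ← prod_pow_eq_pow_sum]
    exact Ideal.prod_mem_prod fun p hp => Ideal.pow_mem_pow
      (hLE p hp ▸ monomial_mem_pathCoverIdeal (hE p hp).isPathCover) _
  rw [hU, monomial_mem_minGens_iff] at hnm
  push Not at hnm
  obtain ⟨c, hct, hc⟩ := hnm hUJ
  obtain ⟨i, hil, hir⟩ := IsMinimalPathCover.exists_lt_sum_smul_apply_add_apply hn hE hct
    fun j hj => le_apply_add_apply_of_monomial_mem_pathCoverIdeal_pow hj hc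
  have hE1 p hp := (hE p hp).le_one
  obtain ⟨p, hp, hap, hp1, hp2⟩ := exists_apply_ne_zero_of_lt_sum_smul_apply_add_apply hE1 hil
  obtain ⟨q, hq, haq, hq1, hq2⟩ := exists_apply_ne_zero_of_lt_sum_smul_apply_add_apply hE1 hir
  obtain ⟨A, B, hA, hB, hAB⟩ :=
    (hE p hp).isPathCover.exists_add_add_single_eq (hE q hq).isPathCover hp1 hq1 hq2
  refine ⟨p, q, hap, haq, fun hmin => ?_⟩
  rw [hLE p hp, hLE q hq, monomial_mul, one_mul, monomial_mem_minGens_iff] at hmin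
  refine hmin.2 (A + B) (hAB ▸ lt_add_of_pos_right _ (pos_iff_ne_zero.2 (by simpa using hp2))) ?_
  rw [← one_mul (1 : k), ← monomial_mul, pow_two]
  exact Ideal.mul_mem_mul (monomial_mem_pathCoverIdeal hA) (monomial_mem_pathCoverIdeal hB)

/-- Let `n ≥ 2`, `s ≥ 2`, and let `U` be an `s`-fold product of the
minimal generators `u_1, …, u_r` of `J(P_n)` (enumerated by the rooted list) with
exponent vector `a`.  If `U` is not a minimal generator of `J(P_n)^s`, then there are
indices `p, q` with `a p > 0`, `a q > 0` and `u_p u_q ∉ G(J(P_n)^2)`. -/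
theorem nonminimal_sFold_contains_nonminimal_pair (k : Type*) [Field k]
    (n s : ℕ) (hn : 2 ≤ n) (hs : 2 ≤ s)
    (a : ℕ → ℕ) (U : MvPolynomial ℕ k)
    (hU : IsExprOn (rootedList k n) s a U)
    (hnm : U ∉ minGens ((pathCoverIdeal k n) ^ s)) :
    ∃ p q, 0 < a p ∧ 0 < a q ∧
      (rootedList k n).getD p 1 * (rootedList k n).getD q 1 ∉
        minGens ((pathCoverIdeal k n) ^ 2) :=
  nonminimal_sFold_contains_nonminimal_pair_general k n s hn a U hU hnm
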